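/- arXiv:2004.03114 — 6 statements merged into one kernel-verified Lean document; each statement's English description precedes it below -/
import Mathlib

section
/- Let W be an n×n real matrix, η > 0, x ∈ ℝⁿ, K the entrywise matrix with K_{ij} = e^{-η W_{ij}}, A the matrix with A_{ij} = e^{x_i - x_j} K_{ij}, and P = A / (∑_{ij} A_{ij}). Then (⟨P, W⟩ - η⁻¹ H(P)) - (-η⁻¹ log ∑_{ij} A_{ij}) = η⁻¹ xᵀ(P𝟏 - Pᵀ𝟏), where H(P) = -∑_{ij} P_{ij} log P_{ij} and ⟨P,W⟩ = ∑_{ij} P_{ij} W_{ij}. -/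
/-- **Duality gap identity.** With `K_{ij} = e^{-η W_{ij}}`,
`A = diag(e^x) K diag(e^{-x})` and `P = A / ∑_{ij} A_{ij}`, we have
`(⟨P,W⟩ - η⁻¹ H(P)) - (-η⁻¹ log ∑_{ij} A_{ij}) = η⁻¹ xᵀ(P𝟏 - Pᵀ𝟏)`. -/
theorem duality_gap {n : ℕ} (W : Matrix (Fin n) (Fin n) ℝ) (η : ℝ) (hη : 0 < η)
    (x : Fin n → ℝ) (K A P : Matrix (Fin n) (Fin n) ℝ)
    (hK : ∀ i j, K i j = Real.exp (-η * W i j))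
    (hA : ∀ i j, A i j = Real.exp (x i - x j) * K i j)
    (hP : ∀ i j, P i j = A i j / ∑ i', ∑ j', A i' j') :
    ((∑ i, ∑ j, P i j * W i j) - η⁻¹ * (-∑ i, ∑ j, P i j * Real.log (P i j)))
        - (-(η⁻¹ * Real.log (∑ i, ∑ j, A i j)))
      = η⁻¹ * ∑ i, x i * ((∑ j, P i j) - ∑ j, P j i) := by
  rcases Nat.eq_zero_or_pos n with h0 | hn
  · subst h0; simp
  have hne : (Finset.univ : Finset (Fin n)).Nonempty := ⟨⟨0, hn⟩, Finset.mem_univ _⟩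
  have hApos : ∀ i j, 0 < A i j := by
    intro i j
    rw [hA, hK, ← Real.exp_add]
    exact Real.exp_pos _
  have hS : 0 < ∑ i, ∑ j, A i j :=
    Finset.sum_pos (fun i _ => Finset.sum_pos (fun j _ => hApos i j) hne) hne
  set S := ∑ i, ∑ j, A i j with hSdef
  have hPsum : ∑ i, ∑ j, P i j = 1 := by
    simp only [hP, ← Finset.sum_div]
    exact div_self hS.ne'
  have hlogP : ∀ i j, Real.log (P i j) = x i - x j - η * W i j - Real.log S := by
    intro i j
    rw [hP i j, Real.log_div (hApos i j).ne' hS.ne', hA, hK, ← Real.exp_add,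
      Real.log_exp]
    ring
  have key : ∑ i, ∑ j, P i j * Real.log (P i j)
      = (∑ i, ∑ j, P i j * (x i - x j)) - η * (∑ i, ∑ j, P i j * W i j)
        - Real.log S := by
    have : ∀ i j, P i j * Real.log (P i j)
        = P i j * (x i - x j) - η * (P i j * W i j) - Real.log S * P i j := by
      intro i j; rw [hlogP]; ring
    calc ∑ i, ∑ j, P i j * Real.log (P i j)
        = ∑ i, ∑ j, (P i j * (x i - x j) - η * (P i j * W i j)
            - Real.log S * P i j) := by
          exact Finset.sum_congr rfl fun i _ => Finset.sum_congr rfl fun j _ => this i j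
      _ = (∑ i, ∑ j, P i j * (x i - x j)) - η * (∑ i, ∑ j, P i j * W i j)
            - Real.log S * (∑ i, ∑ j, P i j) := by
          simp [Finset.sum_sub_distrib, Finset.mul_sum]
      _ = _ := by rw [hPsum]; ring
  have hrhs : ∑ i, x i * ((∑ j, P i j) - ∑ j, P j i)
      = ∑ i, ∑ j, P i j * (x i - x j) := by
    have h1 : ∑ i, x i * ∑ j, P j i = ∑ i, ∑ j, P i j * x j := by
      rw [Finset.sum_comm]
      simp [Finset.mul_sum, mul_comm]
    have h2 : ∑ i, x i * ∑ j, P i j = ∑ i, ∑ j, P i j * x i := by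
      simp [Finset.mul_sum, mul_comm]
    simp only [mul_sub, Finset.sum_sub_distrib, h1, h2, mul_sub]
  rw [key, hrhs]
  field_simp
  ring
end

section
/- Let G = (V,E,w) be a weighted directed graph, η > 0, and x ∈ ℝⁿ. Let A_{ij} = e^{x_i - x_j - η w(i,j)} for (i,j) ∈ E. Then -η⁻¹ log(∑_{(i,j)∈E} A_{ij}) ≤ μ(G), where μ(G) is the minimum over directed cycles σ in G of the mean weight (1/|σ|)∑_{e∈σ} w(e). -/
open Finset

/-- A directed cycle: a nonempty list of distinct vertices whose consecutive
pairs (cyclically) are edges of `E`. -/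
def IsCycle {n : ℕ} (E : Finset (Fin n × Fin n)) (c : List (Fin n)) : Prop :=
  c ≠ [] ∧ c.Nodup ∧ ∀ p ∈ c.zip (c.rotate 1), p ∈ E

/-- Mean weight of a cycle. -/
noncomputable def meanWeight {n : ℕ} (w : Fin n × Fin n → ℝ) (c : List (Fin n)) : ℝ :=
  ((c.zip (c.rotate 1)).map w).sum / c.length

/-- Min-mean-cycle value of the digraph `(V, E, w)`. -/
noncomputable def mmc {n : ℕ} (E : Finset (Fin n × Fin n)) (w : Fin n × Fin n → ℝ) : ℝ :=
  sInf {x : ℝ | ∃ c, IsCycle E c ∧ meanWeight w c = x}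

/-- Membership in `Δ_E`: a nonnegative matrix supported on `E` with total sum 1. -/
def InDeltaE {n : ℕ} (E : Finset (Fin n × Fin n)) (P : Matrix (Fin n) (Fin n) ℝ) : Prop :=
  (∀ i j, 0 ≤ P i j) ∧ (∀ i j, (i, j) ∉ E → P i j = 0) ∧ (∑ i, ∑ j, P i j) = 1

/-- A circulation: netflow is balanced at every vertex. -/
def IsBalanced {n : ℕ} (P : Matrix (Fin n) (Fin n) ℝ) : Prop :=
  ∀ i, (∑ j, P i j) = ∑ j, P j i

/-- Total netflow imbalance `‖P𝟏 - Pᵀ𝟏‖₁`. -/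
noncomputable def imb {n : ℕ} (P : Matrix (Fin n) (Fin n) ℝ) : ℝ :=
  ∑ i, |(∑ j, P i j) - ∑ j, P j i|

/-- Entrywise ℓ₁ norm of a matrix. -/
noncomputable def l1 {n : ℕ} (P : Matrix (Fin n) (Fin n) ℝ) : ℝ :=
  ∑ i, ∑ j, |P i j|

/-- There is a directed path from `i` to `j` of length at most `d`. -/
def ConnectsWithin {n : ℕ} (E : Finset (Fin n × Fin n)) (d : ℕ) (i j : Fin n) : Prop :=
  ∃ l : List (Fin n), l.length ≤ d ∧ List.Chain (fun a b => (a, b) ∈ E) i l ∧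
    (i :: l).getLast (List.cons_ne_nil _ _) = j

/-- A directed walk from `s` to `v` along edges of `E`, recorded by its
list of vertices after `s`. -/
def IsWalkFrom {n : ℕ} (E : Finset (Fin n × Fin n)) (s v : Fin n) (l : List (Fin n)) : Prop :=
  List.Chain (fun a b => (a, b) ∈ E) s l ∧ (s :: l).getLast (List.cons_ne_nil _ _) = v

/-- Weight of a walk. -/
noncomputable def walkWeight {n : ℕ} (w : Fin n × Fin n → ℝ) (s : Fin n) (l : List (Fin n)) : ℝ :=
  (((s :: l).zip l).map w).sum

/-! Shifting the weights by the potential `x / η` changes no cycle mean, and after the shift every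
edge `e` has weight at least `-η⁻¹ log ∑ A`, because `log A e ≤ log ∑ A`. -/

theorem List.sum_map_zip_rotate_sub {α M : Type*} [AddCommGroup M] (f : α → M) (l : List α)
    (k : ℕ) : ((l.zip (l.rotate k)).map fun p => f p.2 - f p.1).sum = 0 := by
  have hfst : ((l.zip (l.rotate k)).map fun p => f p.1) = l.map f := by
    conv_rhs => rw [← List.map_fst_zip (l.length_rotate k).ge]
    rw [List.map_map]; rfl
  have hsnd : ((l.zip (l.rotate k)).map fun p => f p.2) = (l.rotate k).map f := by
    conv_rhs => rw [← List.map_snd_zip (l.length_rotate k).le]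
    rw [List.map_map]; rfl
  rw [← Multiset.sum_coe, ← Multiset.map_coe, Multiset.sum_map_sub, Multiset.map_coe,
    Multiset.map_coe, Multiset.sum_coe, Multiset.sum_coe, hfst, hsnd,
    ((l.rotate_perm k).map f).sum_eq, sub_self]

section Cycles

variable {n : ℕ} {E : Finset (Fin n × Fin n)} {w : Fin n × Fin n → ℝ} {c : List (Fin n)}

theorem meanWeight_add_potential (w : Fin n × Fin n → ℝ) (p : Fin n → ℝ) (c : List (Fin n)) :
    meanWeight (fun e => w e + (p e.2 - p e.1)) c = meanWeight w c := by
  rw [meanWeight, meanWeight, List.sum_map_add, List.sum_map_zip_rotate_sub, add_zero]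

theorem IsCycle.le_meanWeight {a : ℝ} (hc : IsCycle E c) (ha : ∀ e ∈ E, a ≤ w e) :
    a ≤ meanWeight w c := by
  obtain ⟨hne, -, hE⟩ := hc
  have hlen : 0 < (c.length : ℝ) := by exact_mod_cast List.length_pos_iff.mpr hne
  have hsum := List.card_nsmul_le_sum ((c.zip (c.rotate 1)).map w) a
    (List.forall_mem_map.2 fun e he => ha e (hE e he))
  rw [meanWeight, le_div_iff₀ hlen]
  simpa [mul_comm] using hsum

theorem le_mmc {a : ℝ} (hcyc : ∃ c, IsCycle E c) (ha : ∀ c, IsCycle E c → a ≤ meanWeight w c) :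
    a ≤ mmc E w := by
  obtain ⟨c₀, hc₀⟩ := hcyc
  refine le_csInf ⟨_, c₀, hc₀, rfl⟩ ?_
  rintro _ ⟨c, hc, rfl⟩
  exact ha c hc

end Cycles

theorem Real.log_le_log_sum_of_mem {ι : Type*} {s : Finset ι} {f : ι → ℝ} {i : ι} (hi : i ∈ s)
    (hf : ∀ j ∈ s, 0 < f j) : Real.log (f i) ≤ Real.log (∑ j ∈ s, f j) :=
  Real.log_le_log (hf i hi) (Finset.single_le_sum (fun j hj => (hf j hj).le) hi)

/-- **Lower bound on MMC via balancing.** With `A_{ij} = e^{x_i - x_j - η w(i,j)}` on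
the edges of `G`, we have `-η⁻¹ log (∑_{(i,j)∈E} A_{ij}) ≤ μ(G)`. -/
theorem softmin_lower_bound_mmc {n : ℕ} (E : Finset (Fin n × Fin n))
    (w : Fin n × Fin n → ℝ) (η : ℝ) (hη : 0 < η) (x : Fin n → ℝ)
    (hcyc : ∃ c, IsCycle E c)
    (A : Fin n × Fin n → ℝ)
    (hA : ∀ e ∈ E, A e = Real.exp (x e.1 - x e.2 - η * w e)) :
    -η⁻¹ * Real.log (∑ e ∈ E, A e) ≤ mmc E w := by
  have hedge : ∀ e ∈ E, -η⁻¹ * Real.log (∑ e ∈ E, A e) ≤ w e + (x e.2 / η - x e.1 / η) := by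
    intro e he
    have hlog := Real.log_le_log_sum_of_mem he fun e he => (hA e he).symm ▸ Real.exp_pos _
    rw [hA e he, Real.log_exp] at hlog
    calc -η⁻¹ * Real.log (∑ e ∈ E, A e) ≤ -η⁻¹ * (x e.1 - x e.2 - η * w e) :=
          mul_le_mul_of_nonpos_left hlog (by simpa using hη.le)
      _ = w e + (x e.2 / η - x e.1 / η) := by field_simp; ring
  refine le_mmc hcyc fun c hc => ?_
  rw [← meanWeight_add_potential w (fun i => x i / η)]
  exact hc.le_meanWeight hedge
end

section
/- Let G = (V,E) be a strongly connected digraph with unweighted diameter d, let P be a normalized flow on E (nonnegative, supported on E, total flow 1), and let imb(P) := ‖P𝟏 - Pᵀ𝟏‖₁. Then there exists a normalized circulation F (F ∈ Δ_E with F𝟏 = Fᵀ𝟏) satisfying ‖F - P‖₁ ≤ 2 d · imb(P). -/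
open Finset

/-!
Fix a vertex `r`. Every vertex `k` reaches `r`, and is reached from `r`, by a walk of length
at most `d`; pushing the imbalance of `P` at `k` along one of these two walks yields a nonnegative
flow `C` on `E` with `netflow C = -netflow P` and total mass at most `d · imb P`. Then `P + C` is a
circulation of mass `1 + ‖C‖₁`, and its normalization `F` satisfies
`F - P = (C - ‖C‖₁ P) / (1 + ‖C‖₁)`, whence `‖F - P‖₁ ≤ 2 ‖C‖₁ ≤ 2 d · imb P`.
-/

open Matrix

section Flow

variable {V : Type*} [Fintype V]

def netflow : Matrix V V ℝ →ₗ[ℝ] V → ℝ where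
  toFun A i := ∑ j, A i j - ∑ j, A j i
  map_add' A B := by ext i; simp only [Matrix.add_apply, sum_add_distrib, Pi.add_apply]; ring
  map_smul' c A := by ext i; simp [mul_sum, mul_sub]

def totalFlow : Matrix V V ℝ →ₗ[ℝ] ℝ where
  toFun A := ∑ i, ∑ j, A i j
  map_add' A B := by simp [sum_add_distrib]
  map_smul' c A := by simp [mul_sum]

theorem netflow_apply (A : Matrix V V ℝ) (i : V) : netflow A i = ∑ j, A i j - ∑ j, A j i := rfl

theorem totalFlow_apply (A : Matrix V V ℝ) : totalFlow A = ∑ i, ∑ j, A i j := rfl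

theorem totalFlow_nonneg {A : Matrix V V ℝ} (h : ∀ i j, 0 ≤ A i j) : 0 ≤ totalFlow A :=
  sum_nonneg fun i _ => sum_nonneg fun j _ => h i j

theorem sum_netflow (A : Matrix V V ℝ) : ∑ i, netflow A i = 0 := by
  simp only [netflow_apply, sum_sub_distrib]
  rw [sum_comm, sub_self]

end Flow

section Walk

variable {V : Type*} [DecidableEq V]

def walkMatrix : V → List V → Matrix V V ℝ
  | _, [] => 0
  | s, b :: l => single s b 1 + walkMatrix b l

theorem walkMatrix_nonneg (s : V) (l : List V) (a b : V) : 0 ≤ walkMatrix s l a b := by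
  induction l generalizing s with
  | nil => simp [walkMatrix]
  | cons c l ih =>
    rw [walkMatrix, Matrix.add_apply, single_apply]
    exact add_nonneg (by split_ifs <;> norm_num) (ih c)

theorem walkMatrix_apply_eq_zero_of_notMem {E : Finset (V × V)} {s : V} {l : List V}
    (h : (s :: l).IsChain fun a b => (a, b) ∈ E) {a b : V} (hab : (a, b) ∉ E) :
    walkMatrix s l a b = 0 := by
  induction l generalizing s with
  | nil => rfl
  | cons c l ih =>
    obtain ⟨hsc, hcl⟩ := List.isChain_cons_cons.1 h
    have hne : ¬(s = a ∧ c = b) := by rintro ⟨rfl, rfl⟩; exact hab hsc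
    rw [walkMatrix, Matrix.add_apply, single_apply_of_ne _ _ _ _ _ hne, ih hcl, add_zero]

variable [Fintype V]

theorem totalFlow_walkMatrix (s : V) (l : List V) : totalFlow (walkMatrix s l) = l.length := by
  induction l generalizing s with
  | nil => simp [walkMatrix]
  | cons c l ih =>
    rw [walkMatrix, map_add, ih, List.length_cons, Nat.cast_succ, add_comm]
    simp [totalFlow_apply, single_apply, ite_and]

theorem netflow_walkMatrix (s : V) (l : List V) :
    netflow (walkMatrix s l) =
      Pi.single s 1 - Pi.single ((s :: l).getLast (List.cons_ne_nil _ _)) 1 := by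
  induction l generalizing s with
  | nil => simp [walkMatrix]
  | cons c l ih =>
    rw [walkMatrix, map_add, ih, List.getLast_cons_cons]
    have hsingle : netflow (single s c (1 : ℝ)) = Pi.single s 1 - Pi.single c 1 := by
      ext i
      simp [netflow_apply, single_apply, ite_and, Pi.single_apply, eq_comm]
    rw [hsingle]
    abel

end Walk

theorem exists_flow_netflow_eq {n : ℕ} (E : Finset (Fin n × Fin n)) (d : ℕ) (r : Fin n)
    (hto : ∀ i, ConnectsWithin E d r i) (hfrom : ∀ i, ConnectsWithin E d i r)
    (s : Fin n → ℝ) (hs : ∑ i, s i = 0) :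
    ∃ C : Matrix (Fin n) (Fin n) ℝ, (∀ i j, 0 ≤ C i j) ∧ (∀ i j, (i, j) ∉ E → C i j = 0) ∧
      netflow C = s ∧ totalFlow C ≤ d * ∑ i, |s i| := by
  choose lt hlt_len hlt_chain hlt_last using hto
  choose lf hlf_len hlf_chain hlf_last using hfrom
  refine ⟨∑ k, ((s k)⁺ • walkMatrix k (lf k) + (s k)⁻ • walkMatrix r (lt k)), ?_, ?_, ?_, ?_⟩
  · intro i j
    simp only [Matrix.sum_apply, Matrix.add_apply, Matrix.smul_apply, smul_eq_mul]
    exact sum_nonneg fun k _ => add_nonneg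
      (mul_nonneg (posPart_nonneg _) (walkMatrix_nonneg ..))
      (mul_nonneg (negPart_nonneg _) (walkMatrix_nonneg ..))
  · intro i j hij
    simp [Matrix.sum_apply, walkMatrix_apply_eq_zero_of_notMem (hlf_chain _) hij,
      walkMatrix_apply_eq_zero_of_notMem (hlt_chain _) hij]
  · have hk : ∀ k, (s k)⁺ • netflow (walkMatrix k (lf k)) + (s k)⁻ • netflow (walkMatrix r (lt k))
        = s k • (Pi.single k 1 - Pi.single r 1) := by
      intro k
      rw [netflow_walkMatrix, netflow_walkMatrix, hlf_last, hlt_last]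
      conv_rhs => rw [← posPart_sub_negPart (s k)]
      module
    simp only [map_sum, map_add, map_smul, hk, smul_sub, sum_sub_distrib, ← sum_smul, hs,
      zero_smul, sub_zero]
    exact (pi_eq_sum_univ' s).symm
  · simp only [map_sum, map_add, map_smul, totalFlow_walkMatrix, smul_eq_mul, mul_sum]
    refine sum_le_sum fun k _ => ?_
    have hlf : ((lf k).length : ℝ) ≤ d := by exact_mod_cast hlf_len k
    have hlt : ((lt k).length : ℝ) ≤ d := by exact_mod_cast hlt_len k
    rw [← posPart_add_negPart (s k), mul_add, mul_comm (d : ℝ), mul_comm (d : ℝ)]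
    gcongr

theorem isBalanced_iff_netflow_eq_zero {n : ℕ} (A : Matrix (Fin n) (Fin n) ℝ) :
    IsBalanced A ↔ netflow A = 0 := by
  simp [IsBalanced, netflow_apply, funext_iff, sub_eq_zero]

theorem inDeltaE_inv_totalFlow_smul {n : ℕ} {E : Finset (Fin n × Fin n)}
    {A : Matrix (Fin n) (Fin n) ℝ} (h0 : ∀ i j, 0 ≤ A i j) (hE : ∀ i j, (i, j) ∉ E → A i j = 0)
    (hA : totalFlow A ≠ 0) : InDeltaE E ((totalFlow A)⁻¹ • A) := by
  have hinv : 0 ≤ (totalFlow A)⁻¹ := inv_nonneg.2 (totalFlow_nonneg h0)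
  refine ⟨fun i j => mul_nonneg hinv (h0 i j), fun i j hij => by simp [hE i j hij], ?_⟩
  rw [← totalFlow_apply, map_smul, smul_eq_mul, inv_mul_cancel₀ hA]

theorem l1_inv_totalFlow_smul_add_sub_le {n : ℕ} {P C : Matrix (Fin n) (Fin n) ℝ}
    (hP0 : ∀ i j, 0 ≤ P i j) (hP1 : totalFlow P = 1) (hC0 : ∀ i j, 0 ≤ C i j) :
    l1 ((totalFlow (P + C))⁻¹ • (P + C) - P) ≤ 2 * totalFlow C := by
  have hc : 0 ≤ totalFlow C := totalFlow_nonneg hC0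
  rw [map_add, hP1]
  set c := totalFlow C
  have hentry : ∀ i j, |((1 + c)⁻¹ • (P + C) - P) i j| ≤ (1 + c)⁻¹ * (C + c • P) i j := by
    intro i j
    have hdiff : ((1 + c)⁻¹ • (P + C) - P) i j = (1 + c)⁻¹ * (C i j - c * P i j) := by
      simp only [Matrix.sub_apply, Matrix.smul_apply, Matrix.add_apply, smul_eq_mul]
      field_simp
      ring
    have hcP : 0 ≤ c * P i j := mul_nonneg hc (hP0 i j)
    rw [hdiff, abs_mul, abs_of_pos (by positivity)]
    gcongr
    simp only [Matrix.add_apply, Matrix.smul_apply, smul_eq_mul]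
    exact abs_sub_le_iff.2 ⟨by linarith [hC0 i j], by linarith [hC0 i j]⟩
  calc l1 ((1 + c)⁻¹ • (P + C) - P)
      ≤ ∑ i, ∑ j, (1 + c)⁻¹ * (C + c • P) i j :=
        sum_le_sum fun i _ => sum_le_sum fun j _ => hentry i j
    _ = (1 + c)⁻¹ * (2 * c) := by
        simp only [← mul_sum]
        rw [← totalFlow_apply, map_add, map_smul, hP1]
        ring
    _ ≤ 2 * c := by
        rw [inv_mul_le_iff₀ (by positivity)]
        nlinarith

/-- **Rounding a near-circulation to a circulation.** If `G` is strongly connected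
with (unweighted) diameter at most `d` and `P ∈ Δ_E`, then there is a normalized
circulation `F ∈ F_E` with `‖F - P‖₁ ≤ 2 d · imb(P)`. -/
theorem round_to_circulation {n : ℕ} (E : Finset (Fin n × Fin n)) (d : ℕ)
    (hconn : ∀ i j : Fin n, ConnectsWithin E d i j)
    (P : Matrix (Fin n) (Fin n) ℝ) (hP : InDeltaE E P) :
    ∃ F : Matrix (Fin n) (Fin n) ℝ, InDeltaE E F ∧ IsBalanced F ∧
      l1 (F - P) ≤ 2 * d * imb P := by
  obtain ⟨hP0, hPE, hP1⟩ := hP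
  obtain ⟨r, -, -⟩ := exists_ne_zero_of_sum_ne_zero (hP1 ▸ one_ne_zero : ∑ i, ∑ j, P i j ≠ 0)
  rw [← totalFlow_apply] at hP1
  obtain ⟨C, hC0, hCE, hCnet, hCflow⟩ :=
    exists_flow_netflow_eq E d r (hconn r) (hconn · r) (-netflow P) (by simp [sum_netflow])
  have hPC0 : ∀ i j, 0 ≤ (P + C) i j := fun i j => add_nonneg (hP0 i j) (hC0 i j)
  have hPCE : ∀ i j, (i, j) ∉ E → (P + C) i j = 0 := fun i j hij => by
    simp [hPE i j hij, hCE i j hij]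
  have hPCflow : totalFlow (P + C) ≠ 0 := by
    rw [map_add, hP1]
    exact (add_pos_of_pos_of_nonneg one_pos (totalFlow_nonneg hC0)).ne'
  refine ⟨(totalFlow (P + C))⁻¹ • (P + C), inDeltaE_inv_totalFlow_smul hPC0 hPCE hPCflow, ?_, ?_⟩
  · rw [isBalanced_iff_netflow_eq_zero, map_smul, map_add netflow, hCnet, add_neg_cancel,
      smul_zero]
  · have himb : ∑ i, |(-netflow P) i| = imb P := by
      simp only [Pi.neg_apply, abs_neg, imb, netflow_apply]
    calc l1 _ ≤ 2 * totalFlow C := l1_inv_totalFlow_smul_add_sub_le hP0 hP1 hC0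
      _ ≤ 2 * (d * imb P) := by rw [← himb]; gcongr
      _ = 2 * d * imb P := by ring
end

section
/- Let G be strongly connected with diameter d, let η = (2.5 log m)/ε with m = |E|, let δ ≤ ε/(16 w_max d) and assume ε ≤ 2 w_max. Suppose x ∈ ℝⁿ is such that A := diag(e^x) exp[-ηW] diag(e^{-x}) satisfies ‖A𝟏 - Aᵀ𝟏‖₁/∑_{ij}A_{ij} ≤ δ and ∑_{ij} A_{ij} ≤ ∑_{ij} e^{-ηW_{ij}}. Then P = A/∑_{ij}A_{ij} satisfies ⟨P,W⟩ ≤ μ(G) + ε/2. -/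
/-!
On every edge `log A_ij = x_i - x_j - η w_ij`, so
`η ⟨A, W⟩ = ∑ A_ij (x_i - x_j) - ∑ A_ij log A_ij`.
For every constant `t` the first sum equals `∑_i (x_i - t) ((A𝟏)_i - (Aᵀ𝟏)_i)`; centring `t` in
the range of `x` bounds it by half the oscillation of `x` times `‖A𝟏 - Aᵀ𝟏‖₁ ≤ δ s`, where
`s = ∑ A_ij`. The oscillation is at most `d (log m + 2 η w_max)`, because every entry
`A_ij ≤ s ≤ ∑ K_ij ≤ m e^{η w_max}`. Jensen's inequality for `t log t` bounds the second sum below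
by `s log (s / m)`, and averaging `log A_ij ≤ log s` around a cycle, where the potential
differences cancel, gives the softmin bound `-log s ≤ η μ(G)`. After dividing by `η s` the error
is `log m / η + osc(x) δ / (2 η)`, which the choice of `η` and `δ` keeps below `ε / 2`.
When `m = 1` we have `η = 0`, but then the only edge is a self-loop and `⟨P, W⟩ = μ(G)`.
-/

open Finset

open Real

section Cycles

variable {n : ℕ} {E : Finset (Fin n × Fin n)} {w : Fin n × Fin n → ℝ}

theorem sum_zip_rotate_sub_eq_zero {α : Type*} (c : List α) (y : α → ℝ) :
    ((c.zip (c.rotate 1)).map fun p => y p.1 - y p.2).sum = 0 := by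
  have hfst : ((c.zip (c.rotate 1)).map fun p => y p.1) = c.map y :=
    (List.map_map ..).symm.trans (congrArg _ (List.map_fst_zip (by simp)))
  have hsnd : ((c.zip (c.rotate 1)).map fun p => y p.2) = (c.rotate 1).map y :=
    (List.map_map ..).symm.trans (congrArg _ (List.map_snd_zip (by simp)))
  have hsplit : ((c.zip (c.rotate 1)).map fun p => y p.1).sum =
      ((c.zip (c.rotate 1)).map fun p => y p.1 - y p.2).sum +
        ((c.zip (c.rotate 1)).map fun p => y p.2).sum := by
    rw [← List.sum_map_add]
    simp
  rw [hfst, hsnd, ((List.rotate_perm c 1).map y).sum_eq] at hsplit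
  linarith

theorem le_meanWeight_of_potential {c : List (Fin n)} {b : ℝ} {y : Fin n → ℝ}
    (hc : IsCycle E c) (h : ∀ p ∈ E, b + (y p.1 - y p.2) ≤ w p) : b ≤ meanWeight w c := by
  have hlen : (0 : ℝ) < c.length := by exact_mod_cast List.length_pos_iff.mpr hc.1
  have hsum := List.sum_le_sum fun p hp => h p (hc.2.2 p hp)
  rw [List.sum_map_add, sum_zip_rotate_sub_eq_zero, List.map_const', List.sum_replicate,
    List.length_zip, List.length_rotate, min_self, nsmul_eq_mul] at hsum
  rw [meanWeight, le_div_iff₀ hlen]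
  linarith

theorem le_mmc_of_potential {b : ℝ} (y : Fin n → ℝ) (hcyc : ∃ c, IsCycle E c)
    (h : ∀ p ∈ E, b + (y p.1 - y p.2) ≤ w p) : b ≤ mmc E w := by
  obtain ⟨c, hc⟩ := hcyc
  exact le_csInf ⟨_, c, hc, rfl⟩ fun _ ⟨c', hc', hmean⟩ => hmean ▸ le_meanWeight_of_potential hc' h

theorem IsCycle.edges_nonempty {c : List (Fin n)} (hc : IsCycle E c) : E.Nonempty := by
  have hzip : c.zip (c.rotate 1) ≠ [] := by
    simpa [← List.length_pos_iff] using hc.1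
  obtain ⟨p, hp⟩ := List.exists_mem_of_ne_nil _ hzip
  exact ⟨p, hc.2.2 p hp⟩

end Cycles

theorem ConnectsWithin.sub_le {n : ℕ} {E : Finset (Fin n × Fin n)} {d : ℕ} {i j : Fin n}
    {x : Fin n → ℝ} {L : ℝ} (h : ConnectsWithin E d i j) (hL : 0 ≤ L)
    (hedge : ∀ p ∈ E, x p.1 - x p.2 ≤ L) : x i - x j ≤ d * L := by
  obtain ⟨l, hld, hchain, rfl⟩ := h
  have telescope : ∀ (l : List (Fin n)) (i : Fin n),
      List.IsChain (fun a b => (a, b) ∈ E) (i :: l) →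
      x i - x ((i :: l).getLast (List.cons_ne_nil _ _)) ≤ l.length * L := by
    intro l
    induction l with
    | nil => simp
    | cons b l ih =>
      intro i hchain
      obtain ⟨hib, hchain⟩ := List.isChain_cons_cons.mp hchain
      have := ih b hchain
      simp only [List.getLast_cons_cons, List.length_cons, Nat.cast_succ]
      linarith [hedge _ hib]
  calc _ ≤ l.length * L := telescope l i hchain
    _ ≤ d * L := by gcongr

theorem sum_mul_log_div_card_le_sum_mul_log {ι : Type*} (S : Finset ι) (f : ι → ℝ)
    (hf : ∀ i ∈ S, 0 ≤ f i) :
    (∑ i ∈ S, f i) * log ((∑ i ∈ S, f i) / S.card) ≤ ∑ i ∈ S, f i * log (f i) := by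
  rcases S.eq_empty_or_nonempty with rfl | hS
  · simp
  have hcard : (0 : ℝ) < S.card := by exact_mod_cast hS.card_pos
  have hjensen := Real.convexOn_mul_log.map_sum_le (t := S) (w := fun _ => (S.card : ℝ)⁻¹)
    (p := f) (fun _ _ => by positivity) (by simp [hcard.ne']) hf
  simp only [smul_eq_mul, ← div_eq_inv_mul, ← Finset.sum_div] at hjensen
  rwa [div_mul_eq_mul_div, div_le_div_iff_of_pos_right hcard] at hjensen

section Sums

variable {ι : Type*} [Fintype ι]

theorem sum_sum_eq_sum_of_support {M : Type*} [AddCommMonoid M] (S : Finset (ι × ι))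
    (f : ι → ι → M) (hf : ∀ i j, (i, j) ∉ S → f i j = 0) :
    ∑ i, ∑ j, f i j = ∑ p ∈ S, f p.1 p.2 := by
  rw [← Fintype.sum_prod_type']
  exact (Finset.sum_subset (Finset.subset_univ S) fun p _ hp => hf p.1 p.2 hp).symm

theorem sum_mul_sub_eq_sum_mul_netflow (A : Matrix ι ι ℝ) (x : ι → ℝ) (t : ℝ) :
    ∑ i, ∑ j, A i j * (x i - x j) = ∑ i, (x i - t) * (∑ j, A i j - ∑ j, A j i) := by
  have hswap : ∑ i, ∑ j, (x i - t) * A j i = ∑ i, ∑ j, (x j - t) * A i j := Finset.sum_comm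
  simp only [mul_sub, Finset.mul_sum, Finset.sum_sub_distrib, hswap]
  simp only [sub_mul, Finset.sum_sub_distrib, mul_comm (A _ _)]
  ring

end Sums

theorem sum_mul_sub_le_half_mul_imb {n : ℕ} (A : Matrix (Fin n) (Fin n) ℝ) {x : Fin n → ℝ}
    {R : ℝ} (hx : ∀ i j, x i - x j ≤ R) : ∑ i, ∑ j, A i j * (x i - x j) ≤ R / 2 * imb A := by
  rcases isEmpty_or_nonempty (Fin n) with hn | hn
  · simp [imb]
  obtain ⟨imax, himax⟩ := Finite.exists_max x
  obtain ⟨imin, himin⟩ := Finite.exists_min x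
  have hcentre : ∀ i, |x i - (x imax + x imin) / 2| ≤ R / 2 := fun i => by
    rw [abs_le]; constructor <;> linarith [himax i, himin i, hx imax imin]
  rw [sum_mul_sub_eq_sum_mul_netflow A x ((x imax + x imin) / 2), imb, Finset.mul_sum]
  refine Finset.sum_le_sum fun i _ => ?_
  calc _ ≤ |(x i - (x imax + x imin) / 2) * (∑ j, A i j - ∑ j, A j i)| := le_abs_self _
    _ ≤ _ := by rw [abs_mul]; gcongr; exact hcentre i

section ScaledKernel

variable {n : ℕ} (E : Finset (Fin n × Fin n)) (w : Fin n × Fin n → ℝ) (η : ℝ) (x : Fin n → ℝ)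

/-- `diag(e^x) exp[-ηW] diag(e^{-x})`. -/
noncomputable def scaledKernel : Matrix (Fin n) (Fin n) ℝ :=
  fun i j => if (i, j) ∈ E then exp (x i - x j - η * w (i, j)) else 0

variable {E w η x}

theorem scaledKernel_of_mem {i j : Fin n} (h : (i, j) ∈ E) :
    scaledKernel E w η x i j = exp (x i - x j - η * w (i, j)) := if_pos h

theorem scaledKernel_of_not_mem {i j : Fin n} (h : (i, j) ∉ E) :
    scaledKernel E w η x i j = 0 := if_neg h

theorem scaledKernel_pos_of_mem {i j : Fin n} (h : (i, j) ∈ E) :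
    0 < scaledKernel E w η x i j := by
  rw [scaledKernel_of_mem h]
  exact exp_pos _

theorem scaledKernel_nonneg (i j : Fin n) : 0 ≤ scaledKernel E w η x i j := by
  unfold scaledKernel
  split_ifs <;> positivity

theorem scaledKernel_le_sum (i j : Fin n) :
    scaledKernel E w η x i j ≤ ∑ i, ∑ j, scaledKernel E w η x i j :=
  calc _ ≤ ∑ j, scaledKernel E w η x i j :=
        Finset.single_le_sum (fun j _ => scaledKernel_nonneg i j) (Finset.mem_univ j)
    _ ≤ _ := Finset.single_le_sum
        (fun i _ => Finset.sum_nonneg fun j _ => scaledKernel_nonneg i j) (Finset.mem_univ i)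

theorem sum_scaledKernel_pos (hcyc : ∃ c, IsCycle E c) :
    0 < ∑ i, ∑ j, scaledKernel E w η x i j := by
  obtain ⟨c, hc⟩ := hcyc
  obtain ⟨p, hp⟩ := hc.edges_nonempty
  exact (scaledKernel_pos_of_mem hp).trans_le (scaledKernel_le_sum p.1 p.2)

theorem sub_sub_mul_le_log_sum_scaledKernel (hcyc : ∃ c, IsCycle E c) {p : Fin n × Fin n}
    (hp : p ∈ E) : x p.1 - x p.2 - η * w p ≤ log (∑ i, ∑ j, scaledKernel E w η x i j) := by
  rw [le_log_iff_exp_le (sum_scaledKernel_pos hcyc), ← scaledKernel_of_mem hp]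
  exact scaledKernel_le_sum p.1 p.2

/-- The softmin lower bound on `μ(G)`, certified by the potentials `x / η`. -/
theorem neg_log_sum_scaledKernel_le (hη : 0 < η) (hcyc : ∃ c, IsCycle E c) :
    -log (∑ i, ∑ j, scaledKernel E w η x i j) ≤ η * mmc E w := by
  have h := le_mmc_of_potential (w := w) (b := -log (∑ i, ∑ j, scaledKernel E w η x i j) / η)
    (fun i => x i / η) hcyc fun p hp => by
      rw [← sub_div, ← add_div, div_le_iff₀ hη]
      linarith [sub_sub_mul_le_log_sum_scaledKernel (w := w) (x := x) (η := η) hcyc hp]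
  rwa [div_le_iff₀' hη] at h

theorem mul_sum_scaledKernel_mul_weight :
    η * ∑ i, ∑ j, scaledKernel E w η x i j * w (i, j) =
      ∑ i, ∑ j, scaledKernel E w η x i j * (x i - x j) -
        ∑ i, ∑ j, scaledKernel E w η x i j * log (scaledKernel E w η x i j) := by
  simp only [Finset.mul_sum, ← Finset.sum_sub_distrib]
  refine Finset.sum_congr rfl fun i _ => Finset.sum_congr rfl fun j _ => ?_
  by_cases h : (i, j) ∈ E
  · rw [scaledKernel_of_mem h, log_exp]
    ring
  · simp [scaledKernel_of_not_mem h]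

theorem sum_mul_log_div_card_le_sum_scaledKernel_mul_log :
    (∑ i, ∑ j, scaledKernel E w η x i j) *
        log ((∑ i, ∑ j, scaledKernel E w η x i j) / E.card) ≤
      ∑ i, ∑ j, scaledKernel E w η x i j * log (scaledKernel E w η x i j) := by
  have hsupp := sum_sum_eq_sum_of_support E (scaledKernel E w η x) fun i j h =>
    scaledKernel_of_not_mem h
  rw [hsupp, sum_sum_eq_sum_of_support E _ fun i j h => by simp [scaledKernel_of_not_mem h]]
  exact sum_mul_log_div_card_le_sum_mul_log E _ fun p _ => scaledKernel_nonneg p.1 p.2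

end ScaledKernel

section ScaledKernelBounds

variable {n : ℕ} {E : Finset (Fin n × Fin n)} {w : Fin n × Fin n → ℝ} {η : ℝ} {x : Fin n → ℝ}

theorem sum_scaledKernel_zero_le {wmax : ℝ} (hη : 0 ≤ η) (hw : ∀ e ∈ E, |w e| ≤ wmax) :
    ∑ i, ∑ j, scaledKernel E w η 0 i j ≤ E.card * exp (η * wmax) := by
  rw [sum_sum_eq_sum_of_support E _ fun i j h => scaledKernel_of_not_mem h, ← nsmul_eq_mul]
  refine Finset.sum_le_card_nsmul _ _ _ fun p hp => ?_
  rw [scaledKernel_of_mem hp, exp_le_exp]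
  have := mul_le_mul_of_nonneg_left ((neg_le_abs (w p)).trans (hw p hp)) hη
  simp only [Pi.zero_apply, sub_zero, zero_sub]
  linarith

theorem sub_le_log_card_add_of_sum_scaledKernel_le {wmax : ℝ} (hcyc : ∃ c, IsCycle E c)
    (hη : 0 ≤ η) (hw : ∀ e ∈ E, |w e| ≤ wmax)
    (hsum : ∑ i, ∑ j, scaledKernel E w η x i j ≤ E.card * exp (η * wmax))
    {p : Fin n × Fin n} (hp : p ∈ E) : x p.1 - x p.2 ≤ log E.card + 2 * η * wmax := by
  have hcard : (0 : ℝ) < E.card := by exact_mod_cast (hcyc.choose_spec.edges_nonempty).card_pos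
  have hlog := (sub_sub_mul_le_log_sum_scaledKernel hcyc hp).trans
    (log_le_log (sum_scaledKernel_pos hcyc) hsum)
  rw [log_mul hcard.ne' (exp_pos _).ne', log_exp] at hlog
  have := mul_le_mul_of_nonneg_left ((le_abs_self (w p)).trans (hw p hp)) hη
  linarith

theorem mul_sum_scaledKernel_mul_weight_le (hη : 0 < η) (hcyc : ∃ c, IsCycle E c) {R : ℝ}
    (hx : ∀ i j, x i - x j ≤ R) :
    η * ∑ i, ∑ j, scaledKernel E w η x i j * w (i, j) ≤
      (∑ i, ∑ j, scaledKernel E w η x i j) * (η * mmc E w + log E.card) +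
        R / 2 * imb (scaledKernel E w η x) := by
  have hs := sum_scaledKernel_pos (w := w) (η := η) (x := x) hcyc
  have hcard : (0 : ℝ) < E.card := by exact_mod_cast (hcyc.choose_spec.edges_nonempty).card_pos
  have hentropy :=
    sum_mul_log_div_card_le_sum_scaledKernel_mul_log (E := E) (w := w) (η := η) (x := x)
  rw [log_div hs.ne' hcard.ne'] at hentropy
  have hsoftmin :=
    mul_le_mul_of_nonneg_left (neg_log_sum_scaledKernel_le (w := w) (x := x) hη hcyc) hs.le
  rw [mul_sum_scaledKernel_mul_weight]
  linarith [sum_mul_sub_le_half_mul_imb (scaledKernel E w η x) hx]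

theorem sum_div_sum_scaledKernel_mul_le {b : ℝ} (hcyc : ∃ c, IsCycle E c)
    (hw : ∀ p ∈ E, w p ≤ b) :
    ∑ i, ∑ j, scaledKernel E w η x i j / (∑ i', ∑ j', scaledKernel E w η x i' j') * w (i, j)
      ≤ b := by
  have hs := sum_scaledKernel_pos (w := w) (η := η) (x := x) hcyc
  simp only [div_mul_eq_mul_div, ← Finset.sum_div]
  rw [div_le_iff₀ hs, Finset.mul_sum]
  refine Finset.sum_le_sum fun i _ => ?_
  rw [Finset.mul_sum]
  refine Finset.sum_le_sum fun j _ => ?_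
  by_cases h : (i, j) ∈ E
  · rw [mul_comm b]
    exact mul_le_mul_of_nonneg_left (hw _ h) (scaledKernel_nonneg i j)
  · simp [scaledKernel_of_not_mem h]

end ScaledKernelBounds

/-- Here `ℓ` stands for `log m` and `D (ℓ + 2 η w_max)` for the oscillation bound of the
potentials: the choice of `η` and `δ` keeps both error terms within `ε / 2`. -/
theorem balancing_error_le {ℓ wmax ε η δ D : ℝ} (hε : 0 < ε) (hεw : ε ≤ 2 * wmax)
    (hη : η = 2.5 * ℓ / ε) (hℓ : 0 ≤ ℓ) (hD : 0 ≤ D)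
    (hδ : δ ≤ ε / (16 * wmax * D)) : ℓ + D * (ℓ + 2 * η * wmax) / 2 * δ ≤ η * ε / 2 := by
  have hwmax : 0 < wmax := by linarith
  have hη0 : 0 ≤ η := by rw [hη]; positivity
  have hℓη : ℓ = 2 / 5 * η * ε := by rw [hη]; field_simp; ring
  have hDδ : D * δ ≤ ε / (16 * wmax) := by
    rcases hD.eq_or_lt with rfl | hD
    · simp only [zero_mul]; positivity
    · calc D * δ ≤ D * (ε / (16 * wmax * D)) := by gcongr
        _ = ε / (16 * wmax) := by field_simp
  have hsplit : D * (ℓ + 2 * η * wmax) / 2 * δ = (ℓ + 2 * η * wmax) / 2 * (D * δ) := by ring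
  have hbound : (ℓ + 2 * η * wmax) / 2 * (ε / (16 * wmax)) ≤ η * ε / 10 := by
    rw [hℓη, div_mul_div_comm, div_le_div_iff₀ (by positivity) (by norm_num)]
    nlinarith [mul_nonneg hη0 hε.le]
  rw [hsplit]
  have := mul_le_mul_of_nonneg_left hDδ (by positivity : 0 ≤ (ℓ + 2 * η * wmax) / 2)
  linarith

/-- **Reducing MMC optimization to approximate Matrix Balancing.** If `G` is strongly
connected with diameter at most `d`, `η = (2.5 log m)/ε`, `δ ≤ ε/(16 w_max d)`,
`ε ≤ 2 w_max`, and `x` is such that `A = diag(e^x) exp[-ηW] diag(e^{-x})` is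
`δ`-balanced with `∑_{ij} A_{ij} ≤ ∑_{ij} e^{-η W_{ij}}`, then
`P = A/∑_{ij} A_{ij}` satisfies `⟨P, W⟩ ≤ μ(G) + ε/2`. -/
theorem balancing_gives_near_optimal {n : ℕ} (E : Finset (Fin n × Fin n))
    (w : Fin n × Fin n → ℝ) (wmax ε η δ : ℝ) (d : ℕ) (x : Fin n → ℝ)
    (K A : Matrix (Fin n) (Fin n) ℝ)
    (hconn : ∀ i j : Fin n, ConnectsWithin E d i j)
    (hcyc : ∃ c, IsCycle E c)
    (hw : ∀ e ∈ E, |w e| ≤ wmax)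
    (hε : 0 < ε) (hεw : ε ≤ 2 * wmax)
    (hη : η = 2.5 * Real.log (E.card) / ε)
    (hδ : δ ≤ ε / (16 * wmax * d))
    (hK : ∀ i j, K i j = if (i, j) ∈ E then Real.exp (-η * w (i, j)) else 0)
    (hA : ∀ i j, A i j = Real.exp (x i - x j) * K i j)
    (hbal : imb A ≤ δ * ∑ i, ∑ j, A i j)
    (hAK : (∑ i, ∑ j, A i j) ≤ ∑ i, ∑ j, K i j) :
    (∑ i, ∑ j, (A i j / ∑ i', ∑ j', A i' j') * w (i, j)) ≤ mmc E w + ε / 2 := by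
  have hA' : A = scaledKernel E w η x := by
    ext i j
    rw [hA, hK, scaledKernel]
    split_ifs
    · rw [← exp_add]; ring_nf
    · rw [mul_zero]
  have hK' : K = scaledKernel E w η 0 := by
    ext i j
    simp [hK, scaledKernel]
  subst hA' hK'
  have hs := sum_scaledKernel_pos (w := w) (η := η) (x := x) hcyc
  have hcard : 1 ≤ E.card := Finset.one_le_card.mpr hcyc.choose_spec.edges_nonempty
  rcases hcard.eq_or_lt with hone | htwo
  · obtain ⟨e, rfl⟩ := Finset.card_eq_one.mp hone.symm
    calc _ ≤ w e := sum_div_sum_scaledKernel_mul_le hcyc fun p hp => mem_singleton.mp hp ▸ le_rfl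
      _ ≤ mmc {e} w := le_mmc_of_potential 0 hcyc fun p hp => by simp [mem_singleton.mp hp]
      _ ≤ _ := by linarith
  have hlog : 0 < log E.card := log_pos (by exact_mod_cast htwo)
  have hη0 : 0 < η := by rw [hη]; positivity
  have hL : 0 ≤ log E.card + 2 * η * wmax := by nlinarith
  have hosc : ∀ i j, x i - x j ≤ d * (log E.card + 2 * η * wmax) := fun i j =>
    (hconn i j).sub_le hL fun p hp => sub_le_log_card_add_of_sum_scaledKernel_le hcyc hη0.le hw
      (hAK.trans (sum_scaledKernel_zero_le hη0.le hw)) hp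
  have hcore := mul_sum_scaledKernel_mul_weight_le (w := w) hη0 hcyc hosc
  have hbudget := balancing_error_le hε hεw hη hlog.le d.cast_nonneg hδ
  have himb := mul_le_mul_of_nonneg_left hbal
    (by positivity : (0 : ℝ) ≤ d * (log E.card + 2 * η * wmax) / 2)
  have hbudget_s := mul_le_mul_of_nonneg_left hbudget hs.le
  simp only [div_mul_eq_mul_div, ← Finset.sum_div]
  rw [div_le_iff₀ hs, ← mul_le_mul_iff_of_pos_left hη0]
  linarith
end

section
/- Let P ∈ Δ_E, let α ≤ 1/(2m), let R be P with each entry rounded down to the nearest integer multiple of α, and let P̃ = R/∑_{ij}R_{ij}. Then (i) ‖P̃ - P‖₁ ≤ 2αm, and (ii) ‖P̃𝟏 - P̃ᵀ𝟏‖₁ ≤ 2‖P𝟏 - Pᵀ𝟏‖₁ + 4αm. -/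
open Finset

/-!
Rounding down moves each of the at most `m` nonzero entries by less than `α`, so the total mass
lost is `1 - S ≤ α m`, where `S = ∑ R`. Rescaling `R` to `P̃ = R / S` adds back exactly that mass,
so `‖P̃ - P‖₁ ≤ ‖P̃ - R‖₁ + ‖R - P‖₁ = 2 (1 - S) ≤ 2 α m`. Finally `imb` is `2`-Lipschitz for the
entrywise `ℓ₁` norm, since each entry enters one row sum and one column sum.
-/

section Rounding

variable {α : ℝ} (hα : 0 < α) (x : ℝ)
include hα

lemma mul_floor_div_le : α * ⌊x / α⌋ ≤ x := by
  have := mul_le_mul_of_nonneg_left (Int.floor_le (x / α)) hα.le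
  rwa [mul_div_cancel₀ x hα.ne'] at this

lemma sub_mul_floor_div_le : x - α * ⌊x / α⌋ ≤ α := by
  have := mul_le_mul_of_nonneg_left (Int.sub_one_lt_floor (x / α)).le hα.le
  rw [mul_sub, mul_div_cancel₀ x hα.ne', mul_one] at this
  linarith

lemma mul_floor_div_nonneg {x : ℝ} (hx : 0 ≤ x) : 0 ≤ α * ⌊x / α⌋ :=
  mul_nonneg hα.le (by exact_mod_cast Int.floor_nonneg.mpr (div_nonneg hx hα.le))

end Rounding

section MatrixNorms

variable {n : ℕ}

lemma l1_sub_le_l1_sub_add_l1_sub (A B C : Matrix (Fin n) (Fin n) ℝ) :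
    l1 (A - C) ≤ l1 (A - B) + l1 (B - C) := by
  simp only [l1, ← sum_add_distrib, Matrix.sub_apply]
  gcongr with i _ j _
  exact abs_sub_le _ _ _

lemma l1_sub_of_le {P Q : Matrix (Fin n) (Fin n) ℝ} (h : ∀ i j, Q i j ≤ P i j) :
    l1 (Q - P) = ∑ i, ∑ j, P i j - ∑ i, ∑ j, Q i j := by
  simp only [l1, Matrix.sub_apply, ← sum_sub_distrib]
  refine sum_congr rfl fun i _ => sum_congr rfl fun j _ => ?_
  rw [abs_sub_comm, abs_of_nonneg (sub_nonneg.mpr (h i j))]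

lemma l1_smul_sub_self {R : Matrix (Fin n) (Fin n) ℝ} (hR : ∀ i j, 0 ≤ R i j) (c : ℝ) :
    l1 (c • R - R) = |c - 1| * ∑ i, ∑ j, R i j := by
  simp only [l1, Matrix.sub_apply, Matrix.smul_apply, smul_eq_mul, mul_sum]
  refine sum_congr rfl fun i _ => sum_congr rfl fun j _ => ?_
  rw [← sub_one_mul, abs_mul, abs_of_nonneg (hR i j)]

lemma l1_inv_sum_smul_sub_self_le {R : Matrix (Fin n) (Fin n) ℝ} (hR : ∀ i j, 0 ≤ R i j)
    (hR1 : ∑ i, ∑ j, R i j ≤ 1) :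
    l1 ((∑ i, ∑ j, R i j)⁻¹ • R - R) ≤ 1 - ∑ i, ∑ j, R i j := by
  rw [l1_smul_sub_self hR]
  set s := ∑ i, ∑ j, R i j
  rcases eq_or_ne s 0 with hs | hs
  · simp [hs]
  · have hs0 : 0 < s := lt_of_le_of_ne (sum_nonneg fun i _ => sum_nonneg fun j _ => hR i j) hs.symm
    refine le_of_eq ?_
    calc |s⁻¹ - 1| * s = |(s⁻¹ - 1) * s| := by rw [abs_mul, abs_of_pos hs0]
      _ = 1 - s := by rw [sub_mul, inv_mul_cancel₀ hs, one_mul, abs_of_nonneg (sub_nonneg.mpr hR1)]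

lemma imb_nonneg (P : Matrix (Fin n) (Fin n) ℝ) : 0 ≤ imb P :=
  sum_nonneg fun _ _ => abs_nonneg _

lemma imb_le_imb_add_two_mul_l1_sub (P Q : Matrix (Fin n) (Fin n) ℝ) :
    imb Q ≤ imb P + 2 * l1 (Q - P) := by
  have hrow : ∀ i, |∑ j, (Q - P) i j| ≤ ∑ j, |(Q - P) i j| := fun i => abs_sum_le_sum_abs _ _
  have hcol : ∀ i, |∑ j, (Q - P) j i| ≤ ∑ j, |(Q - P) j i| := fun i => abs_sum_le_sum_abs _ _
  have hpoint : ∀ i, |∑ j, Q i j - ∑ j, Q j i| ≤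
      |∑ j, P i j - ∑ j, P j i| + (∑ j, |(Q - P) i j| + ∑ j, |(Q - P) j i|) := by
    intro i
    have hsplit : ∑ j, Q i j - ∑ j, Q j i =
        (∑ j, P i j - ∑ j, P j i) + ∑ j, (Q - P) i j - ∑ j, (Q - P) j i := by
      simp only [Matrix.sub_apply, sum_sub_distrib]; ring
    rw [hsplit]
    linarith [abs_sub (∑ j, P i j - ∑ j, P j i + ∑ j, (Q - P) i j) (∑ j, (Q - P) j i),
      abs_add_le (∑ j, P i j - ∑ j, P j i) (∑ j, (Q - P) i j), hrow i, hcol i]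
  have hcol_sum : ∑ i, ∑ j, |(Q - P) j i| = l1 (Q - P) := sum_comm
  calc imb Q ≤ ∑ i, (|∑ j, P i j - ∑ j, P j i| + (∑ j, |(Q - P) i j| + ∑ j, |(Q - P) j i|)) :=
        sum_le_sum fun i _ => hpoint i
    _ = imb P + 2 * l1 (Q - P) := by
        rw [sum_add_distrib, sum_add_distrib, hcol_sum, l1, imb]; ring

lemma sum_sum_le_card_mul_of_support {E : Finset (Fin n × Fin n)} {Q : Matrix (Fin n) (Fin n) ℝ}
    {c : ℝ} (hQE : ∀ i j, (i, j) ∉ E → Q i j = 0) (hQc : ∀ i j, Q i j ≤ c) :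
    ∑ i, ∑ j, Q i j ≤ E.card * c := by
  rw [← Fintype.sum_prod_type' (f := fun i j => Q i j),
    ← sum_subset (subset_univ E) fun p _ hp => hQE p.1 p.2 hp, ← nsmul_eq_mul]
  exact sum_le_card_nsmul _ _ _ fun p _ => hQc p.1 p.2

end MatrixNorms

theorem quantization_helper_general {n : ℕ} (E : Finset (Fin n × Fin n)) (m : ℕ)
    (hm : m = E.card)
    (P R Pt : Matrix (Fin n) (Fin n) ℝ) (α : ℝ) (hα : 0 < α)
    (hP : InDeltaE E P)
    (hR : ∀ i j, R i j = α * ⌊P i j / α⌋)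
    (hPt : ∀ i j, Pt i j = R i j / ∑ i', ∑ j', R i' j') :
    l1 (Pt - P) ≤ 2 * α * m ∧ imb Pt ≤ 2 * imb P + 4 * α * m := by
  obtain ⟨hP0, hPE, hPsum⟩ := hP
  set S := ∑ i, ∑ j, R i j
  have hR0 : ∀ i j, 0 ≤ R i j := fun i j => hR i j ▸ mul_floor_div_nonneg hα (hP0 i j)
  have hRP : ∀ i j, R i j ≤ P i j := fun i j => hR i j ▸ mul_floor_div_le hα _
  have hPt_eq : Pt = S⁻¹ • R := by
    ext i j
    rw [hPt, Matrix.smul_apply, smul_eq_mul, div_eq_inv_mul]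
  have hloss : 1 - S ≤ α * m := by
    have := sum_sum_le_card_mul_of_support (E := E) (Q := P - R) (c := α)
      (fun i j hij => by simp [hR, hPE i j hij]) fun i j => by
        rw [Matrix.sub_apply, hR]; exact sub_mul_floor_div_le hα _
    simp only [Matrix.sub_apply, sum_sub_distrib, hPsum] at this
    rwa [hm, mul_comm]
  have hS1 : S ≤ 1 := hPsum ▸ sum_le_sum fun i _ => sum_le_sum fun j _ => hRP i j
  have hl1 : l1 (Pt - P) ≤ 2 * α * m := by
    have hround := l1_sub_of_le hRP
    rw [hPsum] at hround
    have hnorm := hPt_eq ▸ l1_inv_sum_smul_sub_self_le hR0 hS1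
    linarith [l1_sub_le_l1_sub_add_l1_sub Pt R P]
  exact ⟨hl1, by linarith [imb_le_imb_add_two_mul_l1_sub P Pt, imb_nonneg P]⟩

/-- **Quantization helper lemma.** Let `P ∈ Δ_E`, `α ≤ 1/(2m)` (with `m = |E|`), let
`R` round each entry of `P` down to the nearest integer multiple of `α`, and let
`P̃ = R/∑_{ij} R_{ij}`. Then (i) `‖P̃ - P‖₁ ≤ 2αm` and
(ii) `imb(P̃) ≤ 2 imb(P) + 4αm`. -/
theorem quantization_helper {n : ℕ} (E : Finset (Fin n × Fin n)) (m : ℕ)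
    (hm : m = E.card)
    (P R Pt : Matrix (Fin n) (Fin n) ℝ) (α : ℝ) (hα : 0 < α)
    (hαm : α ≤ 1 / (2 * m))
    (hP : InDeltaE E P)
    (hR : ∀ i j, R i j = α * ⌊P i j / α⌋)
    (hPt : ∀ i j, Pt i j = R i j / ∑ i', ∑ j', R i' j') :
    l1 (Pt - P) ≤ 2 * α * m ∧ imb Pt ≤ 2 * imb P + 4 * α * m :=
  quantization_helper_general E m hm P R Pt α hα hP hR hPt
end

section
/- Let G be a digraph with no negative-weight cycles (integer weights), s a source vertex, T a spanning tree rooted at s, and for each vertex v let d_{w,T}(v) be the weight of the s→v path in T and d_w(v) the shortest-path distance. If p ∈ ℝⁿ satisfies w(i,j) + p_i - p_j ≥ -ε for all edges (i,j), and T is a shortest-path tree for the weights w(i,j) + p_i - p_j + ε, then for every v, d_{w,T}(v) - d_w(v) ≤ εn. -/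
open Finset

/-!
Reweighting by the potential `p` shifts the weight of every `s → v` walk by the same amount
`p s - p v`, and adding `ε` to every edge adds `ε` times the number of edges. Hence optimality of
the tree path for the modified weights says that its `w`-weight exceeds that of any `s → v` walk
`l` by at most `ε |l|`. With no negative cycles, every walk can be shortened to a simple one,
which has fewer than `n` edges, without increasing its `w`-weight.
-/

section

variable {n : ℕ}

lemma walkWeight_cons (w : Fin n × Fin n → ℝ) (s b : Fin n) (l : List (Fin n)) :
    walkWeight w s (b :: l) = w (s, b) + walkWeight w b l := by
  simp [walkWeight]

lemma walkWeight_append_cons (w : Fin n × Fin n → ℝ) (s x : Fin n) (A C : List (Fin n)) :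
    walkWeight w s (A ++ x :: C) = walkWeight w s (A ++ [x]) + walkWeight w x C := by
  induction A generalizing s with
  | nil => simp [walkWeight]
  | cons b A ih => simp [walkWeight_cons, ih, add_assoc]

lemma walkWeight_add_const (w : Fin n × Fin n → ℝ) (c : ℝ) (s : Fin n) (l : List (Fin n)) :
    walkWeight (fun e => w e + c) s l = walkWeight w s l + c * l.length := by
  induction l generalizing s with
  | nil => simp [walkWeight]
  | cons b l ih => simp only [walkWeight_cons, ih, List.length_cons]; push_cast; ring

lemma walkWeight_add_potential (w : Fin n × Fin n → ℝ) (p : Fin n → ℝ) (s : Fin n)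
    (l : List (Fin n)) :
    walkWeight (fun e => w e + p e.1 - p e.2) s l
      = walkWeight w s l + p s - p ((s :: l).getLast (List.cons_ne_nil _ _)) := by
  induction l generalizing s with
  | nil => simp [walkWeight]
  | cons b l ih =>
    rw [walkWeight_cons, walkWeight_cons, ih, List.getLast_cons (List.cons_ne_nil b l)]; ring

lemma zip_rotate_one_cons {α : Type*} (s : α) (A : List α) :
    (s :: A).zip ((s :: A).rotate 1) = (s :: (A ++ [s])).zip (A ++ [s]) := by
  rw [List.rotate_cons_succ, List.rotate_zero, ← List.cons_append]
  conv_rhs => rw [← List.append_nil (A ++ [s]), List.zip_append (by simp)]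
  simp

variable {E : Finset (Fin n × Fin n)}

lemma isWalkFrom_cons_iff {s v b : Fin n} {l : List (Fin n)} :
    IsWalkFrom E s v (b :: l) ↔ (s, b) ∈ E ∧ IsWalkFrom E b v l := by
  constructor
  · rintro ⟨hchain, hv⟩
    exact ⟨(List.isChain_cons_cons.mp hchain).1, (List.isChain_cons_cons.mp hchain).2, hv⟩
  · rintro ⟨hsb, hchain, hv⟩
    exact ⟨List.isChain_cons_cons.mpr ⟨hsb, hchain⟩, hv⟩

lemma IsWalkFrom.of_append_cons {s v : Fin n} {A C : List (Fin n)}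
    (h : IsWalkFrom E s v (A ++ s :: C)) : IsWalkFrom E s v C := by
  obtain ⟨hchain, hlast⟩ := h
  refine ⟨hchain.suffix ⟨s :: A, by simp⟩, ?_⟩
  rw [← hlast]
  simp

lemma IsWalkFrom.isCycle_of_append_cons {s v : Fin n} {A C : List (Fin n)}
    (h : IsWalkFrom E s v (A ++ s :: C)) (hA : (s :: A).Nodup) : IsCycle E (s :: A) := by
  have hchain : (s :: A ++ [s]).IsChain (fun a b => (a, b) ∈ E) :=
    List.IsChain.infix h.1 ⟨[], C, by simp⟩
  refine ⟨List.cons_ne_nil s A, hA, fun e he => ?_⟩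
  rw [List.rotate_cons_succ, List.rotate_zero] at he
  exact (List.forall₂_iff_zip.mp
    (List.isChain_cons_append_singleton_iff_forall₂.mp hchain)).2 he

lemma cycleWeight_eq_walkWeight (w : Fin n × Fin n → ℝ) (s : Fin n) (A : List (Fin n)) :
    (((s :: A).zip ((s :: A).rotate 1)).map w).sum = walkWeight w s (A ++ [s]) := by
  rw [zip_rotate_one_cons, walkWeight]

theorem IsWalkFrom.exists_nodup_walkWeight_le {w : Fin n × Fin n → ℝ}
    (hw : ∀ c, IsCycle E c → 0 ≤ ((c.zip (c.rotate 1)).map w).sum) {s v : Fin n}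
    {l : List (Fin n)} (hl : IsWalkFrom E s v l) :
    ∃ l', IsWalkFrom E s v l' ∧ (s :: l').Nodup ∧ walkWeight w s l' ≤ walkWeight w s l := by
  induction l generalizing s with
  | nil => exact ⟨[], hl, List.nodup_singleton s, le_rfl⟩
  | cons b t ih =>
    obtain ⟨hsb, hbt⟩ := isWalkFrom_cons_iff.mp hl
    obtain ⟨t', ht', hnd, hle⟩ := ih hbt
    have hwalk : IsWalkFrom E s v (b :: t') := isWalkFrom_cons_iff.mpr ⟨hsb, ht'⟩
    have hle' : walkWeight w s (b :: t') ≤ walkWeight w s (b :: t) := by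
      rw [walkWeight_cons, walkWeight_cons]
      linarith
    by_cases hs : s ∈ b :: t'
    · -- `s` reappears on the walk: cut off the closed walk through `s`, a cycle of weight `≥ 0`
      obtain ⟨A, C, hAC⟩ := List.append_of_mem hs
      rw [hAC] at hwalk hle' hnd
      have hA : (s :: A).Nodup := (List.nodup_middle.mp hnd).sublist (by simp)
      have hcycle := hw _ (hwalk.isCycle_of_append_cons hA)
      rw [cycleWeight_eq_walkWeight] at hcycle
      refine ⟨C, hwalk.of_append_cons, (List.nodup_append.mp hnd).2.1, ?_⟩
      rw [walkWeight_append_cons] at hle'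
      linarith
    · exact ⟨b :: t', hwalk, List.nodup_cons.mpr ⟨hs, hnd⟩, hle'⟩

end

theorem approx_sssp_tree_general {n : ℕ} (E : Finset (Fin n × Fin n))
    (w : Fin n × Fin n → ℤ) (s : Fin n) (p : Fin n → ℝ) (ε : ℝ) (hε : 0 ≤ ε)
    (hnoneg : ∀ c, IsCycle E c → 0 ≤ ((c.zip (c.rotate 1)).map w).sum)
    (tpath : Fin n → List (Fin n))
    (htree : ∀ v, IsWalkFrom E s v (tpath v) ∧ (s :: tpath v).Nodup)
    (hT : ∀ v, ∀ l, IsWalkFrom E s v l →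
      walkWeight (fun e => (w e : ℝ) + p e.1 - p e.2 + ε) s (tpath v)
        ≤ walkWeight (fun e => (w e : ℝ) + p e.1 - p e.2 + ε) s l) :
    ∀ v : Fin n,
      walkWeight (fun e => (w e : ℝ)) s (tpath v)
          - sInf {r : ℝ | ∃ l, IsWalkFrom E s v l ∧ walkWeight (fun e => (w e : ℝ)) s l = r}
        ≤ ε * n := by
  intro v
  have hnoneg_real (c : List (Fin n)) (hc : IsCycle E c) :
      0 ≤ ((c.zip (c.rotate 1)).map fun e => (w e : ℝ)).sum := by
    simpa [Int.cast_list_sum, List.map_map, Function.comp_def] using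
      Int.cast_nonneg (R := ℝ) (hnoneg c hc)
  rw [sub_le_comm]
  refine le_csInf ⟨_, tpath v, (htree v).1, rfl⟩ ?_
  rintro _ ⟨l, hl, rfl⟩
  obtain ⟨l', hl', hnd, hle⟩ := hl.exists_nodup_walkWeight_le hnoneg_real
  have hopt := hT v l' hl'
  rw [walkWeight_add_const, walkWeight_add_const, walkWeight_add_potential,
    walkWeight_add_potential, (htree v).1.2, hl'.2] at hopt
  have hlen : (l'.length : ℝ) ≤ n := by
    have := hnd.length_le_card
    simp only [List.length_cons, Fintype.card_fin] at this
    exact_mod_cast (by omega : l'.length ≤ n)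
  linarith [mul_le_mul_of_nonneg_left hlen hε, mul_nonneg hε (Nat.cast_nonneg (tpath v).length)]

/-- **Approximate shortest-path trees from approximate potentials.** Let `G` have
integer weights and no negative cycles, `s` a source, and for each vertex `v` let
`tpath v` be the (simple) `s → v` path of a spanning tree `T` rooted at `s`. If
`w(i,j) + p_i - p_j ≥ -ε` on every edge and `T` is a shortest-path tree for the
weights `w(i,j) + p_i - p_j + ε`, then `d_{w,T}(v) - d_w(v) ≤ ε n` for every `v`. -/
theorem approx_sssp_tree {n : ℕ} (E : Finset (Fin n × Fin n))
    (w : Fin n × Fin n → ℤ) (s : Fin n) (p : Fin n → ℝ) (ε : ℝ) (hε : 0 ≤ ε)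
    (hnoneg : ∀ c, IsCycle E c → 0 ≤ ((c.zip (c.rotate 1)).map w).sum)
    (tpath : Fin n → List (Fin n))
    (htree : ∀ v, IsWalkFrom E s v (tpath v) ∧ (s :: tpath v).Nodup)
    (hp : ∀ e ∈ E, -ε ≤ (w e : ℝ) + p e.1 - p e.2)
    (hT : ∀ v, ∀ l, IsWalkFrom E s v l →
      walkWeight (fun e => (w e : ℝ) + p e.1 - p e.2 + ε) s (tpath v)
        ≤ walkWeight (fun e => (w e : ℝ) + p e.1 - p e.2 + ε) s l) :
    ∀ v : Fin n,
      walkWeight (fun e => (w e : ℝ)) s (tpath v)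
          - sInf {r : ℝ | ∃ l, IsWalkFrom E s v l ∧ walkWeight (fun e => (w e : ℝ)) s l = r}
        ≤ ε * n :=
  approx_sssp_tree_general E w s p ε hε hnoneg tpath htree hT
end
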